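/- Let σ = {p_n : n ∈ ℤ}, let F be the infinitary conjunction ⋀_{n ∈ ℤ} (p_{n+1} → p_n), let P_1 = {p_n : n even}, P_2 = {p_n : n odd}, and let I = σ. Then the partition {P_1, P_2} is separable on the dependency graph DG_{P_1 ∪ P_2}[F], I is both a P_1-stable model and a P_2-stable model of F, but I is not a (P_1 ∪ P_2)-stable model of F. -/

import Mathlib

/-- Infinitary propositional formulas over signature `σ`:
atoms, conjunctions and disjunctions of (index-)sets of formulas, implication. -/
inductive Formula (σ : Type) : Type 1
  | atom : σ → Formula σ
  | conj : (ι : Type) → (ι → Formula σ) → Formula σ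
  | disj : (ι : Type) → (ι → Formula σ) → Formula σ
  | imp : Formula σ → Formula σ → Formula σ

namespace Formula

variable {σ : Type}

/-- `⊥` is the empty disjunction. -/
def bot : Formula σ := Formula.disj Empty (fun e => e.elim)

/-- Binary conjunction `F ∧ G`. -/
def and (F G : Formula σ) : Formula σ := Formula.conj Bool (fun b => if b then F else G)

/-- Binary disjunction `F ∨ G`. -/
def or (F G : Formula σ) : Formula σ := Formula.disj Bool (fun b => if b then F else G)

/-- Negation `¬F` abbreviates `F → ⊥`. -/
def neg (F : Formula σ) : Formula σ := Formula.imp F bot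

/-- Conjunction of a set of atoms. -/
def conjAtoms (S : Set σ) : Formula σ := Formula.conj S (fun p => Formula.atom p.val)

/-- Satisfaction of an infinitary formula by an interpretation `I ⊆ σ`. -/
def Sat (I : Set σ) : Formula σ → Prop
  | .atom p => p ∈ I
  | .conj _ f => ∀ i, Sat I (f i)
  | .disj _ f => ∃ i, Sat I (f i)
  | .imp F G => Sat I F → Sat I G

open Classical in
/-- The reduct `F^I`. -/
noncomputable def reduct (I : Set σ) : Formula σ → Formula σ
  | .atom p => if p ∈ I then Formula.atom p else bot
  | .conj ι f => Formula.conj ι (fun i => reduct I (f i))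
  | .disj ι f => Formula.disj ι (fun i => reduct I (f i))
  | .imp F G => if Sat I (Formula.imp F G) then Formula.imp (reduct I F) (reduct I G) else bot

/-- `I` is an `A`-stable model of `F`: `I` is minimal w.r.t. `≤_A`
(`J ≤_A I` iff `J ⊆ I` and `I \ J ⊆ A`) among interpretations satisfying `F^I`. -/
def AStable (A : Set σ) (I : Set σ) (F : Formula σ) : Prop :=
  Sat I (reduct I F) ∧ ∀ J : Set σ, J ⊆ I → I \ J ⊆ A → Sat J (reduct I F) → J = I

/-- A stable model is a `σ`-stable model. -/
def Stable (I : Set σ) (F : Formula σ) : Prop := AStable Set.univ I F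

/-- The strictly positive atoms `P(F)`. -/
def spos : Formula σ → Set σ
  | .atom p => {p}
  | .conj _ f => ⋃ i, spos (f i)
  | .disj _ f => ⋃ i, spos (f i)
  | .imp _ H => spos H

/-- `F` is (syntactically) the formula `⊥`, i.e. an empty disjunction. -/
def IsBot : Formula σ → Prop
  | .disj ι _ => IsEmpty ι
  | _ => False

open Classical in
mutual
/-- Positive nonnegated atoms `Pnn(F)`. -/
noncomputable def pnn : Formula σ → Set σ
  | .atom p => {p}
  | .conj _ f => ⋃ i, pnn (f i)
  | .disj _ f => ⋃ i, pnn (f i)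
  | .imp G H => if IsBot H then ∅ else nnn G ∪ pnn H

/-- Negative nonnegated atoms `Nnn(F)`. -/
noncomputable def nnn : Formula σ → Set σ
  | .atom _ => ∅
  | .conj _ f => ⋃ i, nnn (f i)
  | .disj _ f => ⋃ i, nnn (f i)
  | .imp G H => if IsBot H then ∅ else pnn G ∪ nnn H
end

/-- The rules of a formula, as antecedent/consequent pairs. -/
def rules : Formula σ → Set (Formula σ × Formula σ)
  | .atom _ => ∅
  | .conj _ f => ⋃ i, rules (f i)
  | .disj _ f => ⋃ i, rules (f i)
  | .imp G H => insert (G, H) (rules H)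

/-- Edge relation of the positive dependency graph `DG_A[F]` (vertex set `A`). -/
noncomputable def DGEdge (F : Formula σ) (A : Set σ) (p q : σ) : Prop :=
  p ∈ A ∧ q ∈ A ∧ ∃ R ∈ rules F, p ∈ spos R.2 ∧ q ∈ pnn R.1

/-- The atoms occurring in a formula. -/
def atoms : Formula σ → Set σ
  | .atom p => {p}
  | .conj _ f => ⋃ i, atoms (f i)
  | .disj _ f => ⋃ i, atoms (f i)
  | .imp G H => atoms G ∪ atoms H

/-- `G` is a definition for the set `Q` of atoms: a conjunction of formulas
`H ∧ C^∧ → q` with `q ∈ Q`, `C ⊆ Q`, and no atom of `Q` occurring in `H`. -/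
def IsDefinition (Q : Set σ) (G : Formula σ) : Prop :=
  ∃ (ι : Type) (g : ι → Formula σ), G = Formula.conj ι g ∧
    ∀ i, ∃ (H : Formula σ) (C : Set σ) (q : σ),
      q ∈ Q ∧ C ⊆ Q ∧ (∀ p ∈ Q, p ∉ atoms H) ∧
      g i = Formula.imp (Formula.and H (conjAtoms C)) (Formula.atom q)

end Formula

section Graph

variable {V : Type*}

/-- An infinite walk in the directed graph with edge relation `E`. -/
def IsInfWalk (E : V → V → Prop) (w : ℕ → V) : Prop := ∀ i, E (w i) (w (i + 1))

/-- The partition `{P₁, P₂}` is infinitely separable: every infinite walk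
visits `P₁` or `P₂` only finitely often. -/
def InfSeparable (E : V → V → Prop) (P1 P2 : Set V) : Prop :=
  ∀ w : ℕ → V, IsInfWalk E w → {i | w i ∈ P1}.Finite ∨ {i | w i ∈ P2}.Finite

/-- `u` and `v` are in the same strongly connected component:
each is reachable from the other. -/
def SameSCC (E : V → V → Prop) (u v : V) : Prop :=
  Relation.ReflTransGen E u v ∧ Relation.ReflTransGen E v u

/-- The partition `{P₁, P₂}` is separable: every strongly connected
component is contained in `P₁` or in `P₂`. -/
def Separable (E : V → V → Prop) (P1 P2 : Set V) : Prop :=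
  ∀ u v, SameSCC E u v → ((u ∈ P1 ∧ v ∈ P1) ∨ (u ∈ P2 ∧ v ∈ P2))

end Graph

/-!
Under `I = σ` every rule `p_{n+1} → p_n` is kept by the reduct, so a subinterpretation `J` satisfies
`F^I` exactly when its complement is closed under `n ↦ n + 1`. A nonempty such complement contains a
final segment `[n, ∞)`, so `σ` is `A`-stable precisely when `A` contains no final segment of `ℤ`.
Neither the even nor the odd atoms contain one, while their union is all of `ℤ`. Separability is
immediate because every edge of the dependency graph goes from `p_n` to `p_{n+1}`, so the graph is
acyclic and its strongly connected components are singletons.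
-/

section Graph

variable {V : Type*} [PartialOrder V] {E : V → V → Prop}

theorem le_of_reflTransGen_of_forall_lt (hE : ∀ p q, E p q → p < q) {u v : V}
    (h : Relation.ReflTransGen E u v) : u ≤ v := by
  induction h with
  | refl => exact le_rfl
  | tail _ hvw ih => exact ih.trans (hE _ _ hvw).le

theorem SameSCC.eq_of_forall_lt (hE : ∀ p q, E p q → p < q) {u v : V} (h : SameSCC E u v) :
    u = v :=
  (le_of_reflTransGen_of_forall_lt hE h.1).antisymm (le_of_reflTransGen_of_forall_lt hE h.2)

theorem separable_of_forall_lt {P1 P2 : Set V} (hE : ∀ p q, E p q → p < q)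
    (hcover : ∀ v, v ∈ P1 ∨ v ∈ P2) : Separable E P1 P2 := by
  intro u v huv
  obtain rfl := huv.eq_of_forall_lt hE
  exact (hcover u).imp (fun h => ⟨h, h⟩) (fun h => ⟨h, h⟩)

end Graph

namespace Formula

variable {σ ι : Type}

def atomRules (a b : ι → σ) : Formula σ :=
  conj ι fun i => imp (atom (a i)) (atom (b i))

theorem sat_reduct_univ_atomRules (a b : ι → σ) (J : Set σ) :
    Sat J (reduct Set.univ (atomRules a b)) ↔ ∀ i, a i ∈ J → b i ∈ J := by
  simp [atomRules, reduct, Sat]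

theorem dgEdge_atomRules_iff (a b : ι → σ) (A : Set σ) (p q : σ) :
    DGEdge (atomRules a b) A p q ↔ p ∈ A ∧ q ∈ A ∧ ∃ i, b i = p ∧ a i = q := by
  simp [DGEdge, atomRules, rules, spos, pnn, eq_comm]

def chain : Formula ℤ := atomRules (· + 1) id

theorem lt_of_dgEdge_chain {A : Set ℤ} {p q : ℤ} (h : DGEdge chain A p q) : p < q := by
  obtain ⟨-, -, n, rfl, rfl⟩ := (dgEdge_atomRules_iff _ _ A p q).1 h
  exact Int.lt_succ n

theorem aStable_univ_chain_iff (A : Set ℤ) :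
    AStable A Set.univ chain ↔ ∀ n, ¬ Set.Ici n ⊆ A := by
  simp only [AStable, chain, sat_reduct_univ_atomRules, id]
  constructor
  · rintro ⟨-, hmin⟩ n hA
    have hIio : Set.Iio n = Set.univ := hmin (Set.Iio n) (Set.subset_univ _)
      (fun m hm => hA (Set.mem_Ici.2 (not_lt.1 hm.2))) (fun m hm => (Int.lt_succ m).trans hm)
    exact lt_irrefl n (hIio ▸ Set.mem_univ n : n ∈ Set.Iio n)
  · refine fun h => ⟨fun _ _ => Set.mem_univ _, fun J _ hA hJ => ?_⟩
    by_contra hne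
    obtain ⟨n, hn⟩ := (Set.ne_univ_iff_exists_notMem J).1 hne
    refine h n fun m hm => hA ⟨Set.mem_univ m, ?_⟩
    induction m, hm using Int.leInduction with
    | base => exact hn
    | succ m _ ih => exact fun hm => ih (hJ m hm)

theorem aStable_univ_chain_of_add_one_notMem {A : Set ℤ} (hA : ∀ n ∈ A, n + 1 ∉ A) :
    AStable A Set.univ chain :=
  (aStable_univ_chain_iff A).2 fun n h => hA n (h Set.self_mem_Ici) (h (Int.le_add_one le_rfl))

end Formula

/-- Separability alone does not suffice for splitting. -/
theorem separable_counterexample :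
    let F : Formula ℤ := Formula.conj ℤ (fun n => Formula.imp (Formula.atom (n + 1)) (Formula.atom n))
    let P1 : Set ℤ := {n | Even n}
    let P2 : Set ℤ := {n | Odd n}
    let I : Set ℤ := Set.univ
    Separable (Formula.DGEdge F (P1 ∪ P2)) P1 P2 ∧
      Formula.AStable P1 I F ∧ Formula.AStable P2 I F ∧
      ¬ Formula.AStable (P1 ∪ P2) I F := by
  intro F P1 P2 I
  have hcover : P1 ∪ P2 = Set.univ := Set.eq_univ_of_forall Int.even_or_odd
  refine ⟨separable_of_forall_lt (fun _ _ => Formula.lt_of_dgEdge_chain) Int.even_or_odd,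
    Formula.aStable_univ_chain_of_add_one_notMem fun n hn h1 => Int.even_add_one.1 h1 hn,
    Formula.aStable_univ_chain_of_add_one_notMem fun n hn h1 =>
      Int.not_even_iff_odd.2 hn (odd_add_one.1 h1), ?_⟩
  change ¬ Formula.AStable (P1 ∪ P2) Set.univ Formula.chain
  rw [Formula.aStable_univ_chain_iff, hcover]
  exact fun h => h 0 (Set.subset_univ _)
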